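/- Suppose A ∈ ℂ^{N,N} satisfies the L^p-dissipativity condition for some 1 < p < ∞ and ℂ-scalars, i.e., |z|² Re⟨w, Aw⟩ + (p−2) Re⟨w,z⟩ Re⟨z, Aw⟩ ≥ γ_A |z|²|w|² for all z, w ∈ ℂ^N with some γ_A > 0. Then the real representation 𝐀 ∈ ℝ^{2N,2N} of A satisfies the analogous condition over ℝ^{2N} with the same constant γ_A: |z|² ⟨w, 𝐀w⟩ + (p−2) ⟨w,z⟩ ⟨z, 𝐀w⟩ ≥ γ_A |z|²|w|² for all z, w ∈ ℝ^{2N}. -/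

import Mathlib

/-!
Identifying `(w₁, w₂) ∈ ℝ^(N ⊕ N)` with `w₁ + i w₂ ∈ ℂ^N` preserves norms, turns the real dot
product into the real part of the Hermitian one, and intertwines `𝐀` with `A`. Hence the real
condition at `(z, w)` is literally the complex condition at the corresponding complex vectors.
-/

open Matrix

section RealPair

variable {ι : Type*} [Fintype ι]

def complexOfRealPair (v : ι ⊕ ι → ℝ) : ι → ℂ :=
  fun j => ⟨v (Sum.inl j), v (Sum.inr j)⟩

theorem norm_toLp_complexOfRealPair (v : EuclideanSpace ℝ (ι ⊕ ι)) :
    ‖WithLp.toLp 2 (complexOfRealPair (v : ι ⊕ ι → ℝ))‖ = ‖v‖ := by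
  simp only [EuclideanSpace.norm_eq, complexOfRealPair, Complex.sq_norm, Complex.normSq_mk,
    Real.norm_eq_abs, sq_abs, Fintype.sum_sum_type, ← Finset.sum_add_distrib]
  congr 1
  refine Finset.sum_congr rfl fun j _ => ?_
  ring

theorem re_star_complexOfRealPair_dotProduct (v u : ι ⊕ ι → ℝ) :
    (star (complexOfRealPair v) ⬝ᵥ complexOfRealPair u).re = v ⬝ᵥ u := by
  simp only [dotProduct, Complex.re_sum, Fintype.sum_sum_type, ← Finset.sum_add_distrib]
  refine Finset.sum_congr rfl fun j _ => ?_
  simp [complexOfRealPair, Complex.mul_re]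

theorem complexOfRealPair_fromBlocks_mulVec (A₁ A₂ : Matrix ι ι ℝ) (u : ι ⊕ ι → ℝ) :
    complexOfRealPair (fromBlocks A₁ (-A₂) A₂ A₁ *ᵥ u) =
      (A₁.map Complex.ofReal + Complex.I • A₂.map Complex.ofReal) *ᵥ complexOfRealPair u := by
  ext j : 1
  apply Complex.ext <;>
    simp [complexOfRealPair, mulVec, dotProduct, Fintype.sum_sum_type, Complex.re_sum,
      Complex.im_sum, Finset.sum_add_distrib, sub_eq_add_neg, add_comm]

end RealPair

theorem Lp_dissipativity_real_representation_general
    (N : ℕ) (A₁ A₂ : Matrix (Fin N) (Fin N) ℝ) (p : ℝ)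
    (γA : ℝ)
    (hdiss : ∀ z w : EuclideanSpace ℂ (Fin N),
      γA * ‖z‖ ^ 2 * ‖w‖ ^ 2 ≤
        ‖z‖ ^ 2 * (star (w : Fin N → ℂ) ⬝ᵥ
            (A₁.map Complex.ofReal + Complex.I • A₂.map Complex.ofReal).mulVec w).re
          + (p - 2) * (star (w : Fin N → ℂ) ⬝ᵥ (z : Fin N → ℂ)).re
              * (star (z : Fin N → ℂ) ⬝ᵥ
                  (A₁.map Complex.ofReal + Complex.I • A₂.map Complex.ofReal).mulVec w).re) :
    ∀ z w : EuclideanSpace ℝ (Fin N ⊕ Fin N),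
      γA * ‖z‖ ^ 2 * ‖w‖ ^ 2 ≤
        ‖z‖ ^ 2 * ((w : Fin N ⊕ Fin N → ℝ) ⬝ᵥ (Matrix.fromBlocks A₁ (-A₂) A₂ A₁).mulVec w)
          + (p - 2) * ((w : Fin N ⊕ Fin N → ℝ) ⬝ᵥ (z : Fin N ⊕ Fin N → ℝ))
              * ((z : Fin N ⊕ Fin N → ℝ) ⬝ᵥ (Matrix.fromBlocks A₁ (-A₂) A₂ A₁).mulVec w) := by
  intro z w
  have h := hdiss (WithLp.toLp 2 (complexOfRealPair z)) (WithLp.toLp 2 (complexOfRealPair w))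
  simpa only [norm_toLp_complexOfRealPair, WithLp.ofLp_toLp,
    ← complexOfRealPair_fromBlocks_mulVec, re_star_complexOfRealPair_dotProduct] using h

/-- If `A ∈ ℂ^{N,N}` satisfies the `L^p`-dissipativity condition with constant `γ_A`,
then its real representation `𝐀 ∈ ℝ^{2N,2N}` satisfies the analogous real condition
with the same constant. -/
theorem Lp_dissipativity_real_representation
    (N : ℕ) (A₁ A₂ : Matrix (Fin N) (Fin N) ℝ) (p : ℝ) (hp1 : 1 < p)
    (γA : ℝ) (hγ : 0 < γA)
    (hdiss : ∀ z w : EuclideanSpace ℂ (Fin N),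
      γA * ‖z‖ ^ 2 * ‖w‖ ^ 2 ≤
        ‖z‖ ^ 2 * (star (w : Fin N → ℂ) ⬝ᵥ
            (A₁.map Complex.ofReal + Complex.I • A₂.map Complex.ofReal).mulVec w).re
          + (p - 2) * (star (w : Fin N → ℂ) ⬝ᵥ (z : Fin N → ℂ)).re
              * (star (z : Fin N → ℂ) ⬝ᵥ
                  (A₁.map Complex.ofReal + Complex.I • A₂.map Complex.ofReal).mulVec w).re) :
    ∀ z w : EuclideanSpace ℝ (Fin N ⊕ Fin N),
      γA * ‖z‖ ^ 2 * ‖w‖ ^ 2 ≤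
        ‖z‖ ^ 2 * ((w : Fin N ⊕ Fin N → ℝ) ⬝ᵥ (Matrix.fromBlocks A₁ (-A₂) A₂ A₁).mulVec w)
          + (p - 2) * ((w : Fin N ⊕ Fin N → ℝ) ⬝ᵥ (z : Fin N ⊕ Fin N → ℝ))
              * ((z : Fin N ⊕ Fin N → ℝ) ⬝ᵥ (Matrix.fromBlocks A₁ (-A₂) A₂ A₁).mulVec w) :=
  Lp_dissipativity_real_representation_general N A₁ A₂ p γA hdiss
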